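/- Comparison of generalized Morrey kernel norms: let 0 < α < n, γ > 0, 1 ≤ s ≤ t with n/(n+γ-α) < t < n/(n-α), t₁ > t, and define σ(R) = (1+R^{n/t₁}) R^{-n/t}. Then ‖K_{α,γ}‖_{L^{s,σ}} < ‖K_{α,γ}‖_{L^{s,t}}, where L^{s,t} corresponds to σ₀(R) = R^{-n/t}. -/

import Mathlib

open MeasureTheory Metric ENNReal

noncomputable section

abbrev En (n : ℕ) := EuclideanSpace ℝ (Fin n)

/-- The Bessel-Riesz kernel `K_{α,γ}(x) = |x|^{α-n}/(1+|x|)^γ`. -/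
def brKernel (n : ℕ) (α γ : ℝ) (x : En n) : ℝ :=
  ‖x‖ ^ (α - n) / (1 + ‖x‖) ^ γ

/-- The Bessel-Riesz operator `I_{α,γ} f(x) = ∫ K_{α,γ}(x-y) f(y) dy`. -/
def brOp (n : ℕ) (α γ : ℝ) (f : En n → ℝ) (x : En n) : ℝ :=
  ∫ y, brKernel n α γ (x - y) * f y

/-- The Hardy-Littlewood maximal function (sup over balls containing `x`). -/
def maximalFn (n : ℕ) (f : En n → ℝ) (x : En n) : ℝ≥0∞ :=
  ⨆ (a : En n) (r : ℝ) (_ : 0 < r) (_ : x ∈ ball a r),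
    (volume (ball a r))⁻¹ * ∫⁻ y in ball a r, ENNReal.ofReal |f y|

/-- The classical Morrey norm `‖f‖_{L^{p,q}}`. -/
def morreyNorm (n : ℕ) (p q : ℝ) (f : En n → ℝ) : ℝ≥0∞ :=
  ⨆ (r : ℝ) (_ : 0 < r) (a : En n),
    ENNReal.ofReal (r ^ ((n : ℝ) * (1 / q - 1 / p))) *
      (∫⁻ x in ball a r, ENNReal.ofReal (|f x| ^ p)) ^ (1 / p)

/-- The generalized Morrey norm `‖f‖_{L^{p,φ}}`. -/
def gMorreyNorm (n : ℕ) (p : ℝ) (φ : ℝ → ℝ) (f : En n → ℝ) : ℝ≥0∞ :=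
  ⨆ (r : ℝ) (_ : 0 < r) (a : En n),
    (ENNReal.ofReal (φ r))⁻¹ *
      (((ENNReal.ofReal r) ^ (n : ℝ))⁻¹ *
        ∫⁻ x in ball a r, ENNReal.ofReal (|f x| ^ p)) ^ (1 / p)

/-- The generalized Morrey norm for `ℝ≥0∞`-valued functions. -/
def gMorreyNormE (n : ℕ) (p : ℝ) (φ : ℝ → ℝ) (g : En n → ℝ≥0∞) : ℝ≥0∞ :=
  ⨆ (r : ℝ) (_ : 0 < r) (a : En n),
    (ENNReal.ofReal (φ r))⁻¹ *
      (((ENNReal.ofReal r) ^ (n : ℝ))⁻¹ * ∫⁻ x in ball a r, (g x) ^ p) ^ (1 / p)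

/-- Generalized Morrey norm of the Bessel-Riesz kernel (sup over all centers). -/
def kNormGen (n : ℕ) (α γ s : ℝ) (σ : ℝ → ℝ) : ℝ≥0∞ :=
  ⨆ (R : ℝ) (_ : 0 < R) (a : En n),
    (ENNReal.ofReal (σ R))⁻¹ *
      (((ENNReal.ofReal R) ^ (n : ℝ))⁻¹ *
        ∫⁻ x in ball a R, ENNReal.ofReal (brKernel n α γ x ^ s)) ^ (1 / s)

/-!
Write `Φ(R, a) = R ^ (n / t) * (R ^ (-n) * ∫_{B(a,R)} K ^ s) ^ (1 / s)`, so that the right-hand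
side is `L = sup Φ` and the left-hand side is `sup Φ / (1 + R ^ (n / t₁))`. Since
`K ^ s ≤ ‖x‖ ^ ((α - n) s)` and `∫_{B(a,R)} ‖x‖ ^ q ≲ R ^ (n + q)` uniformly in `a` for `q > -n`,
`Φ(R, a) ≲ R ^ (n / t + α - n) → 0` uniformly in `a` as `R → 0`. Moreover `0 < L < ∞`: for
`s < t` because `K ^ s ≤ ‖x‖ ^ (-n s / t)`, and for `s = t` because `K ∈ L ^ t`. Choosing
`u < L` and `δ > 0` with `Φ ≤ u` below `δ`, the left-hand side is at most
`max u (L / (1 + δ ^ (n / t₁))) < L`.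
-/

open Set Filter Topology Module
open scoped Pointwise

section HaarBall

variable {E : Type*} [NormedAddCommGroup E] [NormedSpace ℝ E] [MeasurableSpace E] [BorelSpace E]
  [FiniteDimensional ℝ E] (μ : Measure E) [μ.IsAddHaarMeasure]

theorem setLIntegral_comp_smul_of_pos (f : E → ℝ≥0∞) (s : Set E) {R : ℝ} (hR : 0 < R) :
    ∫⁻ x in s, f (R • x) ∂μ = ENNReal.ofReal (R ^ finrank ℝ E)⁻¹ * ∫⁻ x in R • s, f x ∂μ := by
  let e : E ≃ᵐ E := (Homeomorph.smul (Units.mk0 R hR.ne')).toMeasurableEquiv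
  have hs : e ⁻¹' (R • s) = s := by
    ext x
    simp [e, mem_smul_set_iff_inv_smul_mem₀ hR.ne', smul_smul, hR.ne']
  calc ∫⁻ x in s, f (R • x) ∂μ = ∫⁻ x in e ⁻¹' (R • s), f (e x) ∂μ := by rw [hs]; rfl
    _ = ∫⁻ y in R • s, f y ∂(μ.map e) := by
        rw [e.restrict_map, lintegral_map_equiv]
    _ = _ := by
        rw [show (e : E → E) = (R • ·) from rfl, Measure.map_addHaar_smul μ hR.ne',
          Measure.restrict_smul, lintegral_smul_measure, abs_of_pos (by positivity), smul_eq_mul]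

theorem lintegral_ball_zero_norm_rpow (q : ℝ) {R : ℝ} (hR : 0 < R) :
    ∫⁻ x in ball (0 : E) R, ENNReal.ofReal (‖x‖ ^ q) ∂μ =
      ENNReal.ofReal (R ^ ((finrank ℝ E : ℝ) + q)) *
        ∫⁻ x in ball (0 : E) 1, ENNReal.ofReal (‖x‖ ^ q) ∂μ := by
  have h := setLIntegral_comp_smul_of_pos μ (fun x => ENNReal.ofReal (‖x‖ ^ q)) (ball 0 1) hR
  simp only [norm_smul, Real.norm_of_nonneg hR.le, Real.mul_rpow hR.le (norm_nonneg _),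
    ENNReal.ofReal_mul (Real.rpow_nonneg hR.le q), smul_unitBall_of_pos hR] at h
  rw [lintegral_const_mul' _ _ ENNReal.ofReal_ne_top] at h
  have hRd : 0 < R ^ finrank ℝ E := by positivity
  rw [Real.rpow_add hR, Real.rpow_natCast, ENNReal.ofReal_mul hRd.le, mul_assoc, h, ← mul_assoc,
    ← ENNReal.ofReal_mul hRd.le, mul_inv_cancel₀ hRd.ne', ENNReal.ofReal_one, one_mul]

theorem lintegral_ball_zero_norm_rpow_lt_top (hd : 1 ≤ finrank ℝ E) {q : ℝ}
    (hq : -(finrank ℝ E : ℝ) < q) (r : ℝ) :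
    ∫⁻ x in ball (0 : E) r, ENNReal.ofReal (‖x‖ ^ q) ∂μ < ⊤ := by
  refine (integrableOn_ball_of_norm_le_rpow (μ := μ) hd (C := 1) (α := -q) (by linarith)
    (ae_of_all _ fun x => ?_) (measurable_norm.pow_const q).aestronglyMeasurable).lintegral_lt_top
  rw [neg_neg, one_mul, Real.norm_of_nonneg (by positivity)]

theorem exists_lintegral_ball_norm_rpow_le (hd : 1 ≤ finrank ℝ E) {q : ℝ}
    (hq : -(finrank ℝ E : ℝ) < q) (hq0 : q ≤ 0) :
    ∃ C : ℝ≥0∞, C ≠ ⊤ ∧ ∀ (a : E) {R : ℝ}, 0 < R →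
      ∫⁻ x in ball a R, ENNReal.ofReal (‖x‖ ^ q) ∂μ ≤
        C * ENNReal.ofReal (R ^ ((finrank ℝ E : ℝ) + q)) := by
  set J := ∫⁻ x in ball (0 : E) 1, ENNReal.ofReal (‖x‖ ^ q) ∂μ
  refine ⟨ENNReal.ofReal (3 ^ ((finrank ℝ E : ℝ) + q)) * J + μ (ball 0 1),
    by finiteness [(lintegral_ball_zero_norm_rpow_lt_top μ hd hq 1).ne], fun a R hR => ?_⟩
  rw [add_mul]
  by_cases ha : ‖a‖ ≤ 2 * R
  · refine le_add_right ?_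
    calc ∫⁻ x in ball a R, ENNReal.ofReal (‖x‖ ^ q) ∂μ
        ≤ ∫⁻ x in ball (0 : E) (3 * R), ENNReal.ofReal (‖x‖ ^ q) ∂μ :=
          lintegral_mono_set (ball_subset_ball' (by rw [dist_zero_right]; linarith))
      _ = _ := by
          rw [lintegral_ball_zero_norm_rpow μ q (by positivity), Real.mul_rpow (by norm_num) hR.le,
            ENNReal.ofReal_mul (by positivity)]
          ring
  · refine le_add_left ?_
    have hfar : ∀ x ∈ ball a R, ENNReal.ofReal (‖x‖ ^ q) ≤ ENNReal.ofReal (R ^ q) := by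
      intro x hx
      have : R ≤ ‖x‖ := by
        have := norm_sub_norm_le a x
        rw [← dist_eq_norm, dist_comm] at this
        linarith [mem_ball.mp hx]
      exact ENNReal.ofReal_le_ofReal (Real.rpow_le_rpow_of_nonpos hR this hq0)
    calc ∫⁻ x in ball a R, ENNReal.ofReal (‖x‖ ^ q) ∂μ
        ≤ ∫⁻ _ in ball a R, ENNReal.ofReal (R ^ q) ∂μ := setLIntegral_mono' measurableSet_ball hfar
      _ = ENNReal.ofReal (R ^ q) * μ (ball a R) := setLIntegral_const _ _
      _ = _ := by
          rw [Measure.addHaar_ball_of_pos μ a hR, Real.rpow_add hR, Real.rpow_natCast,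
            ENNReal.ofReal_mul (by positivity)]
          ring

end HaarBall

theorem Real.rpow_neg_le_two_rpow_mul_one_add_rpow_neg {r b : ℝ} (hr : 1 ≤ r) (hb : 0 ≤ b) :
    r ^ (-b) ≤ 2 ^ b * (1 + r) ^ (-b) := by
  have hr0 : 0 < r := by linarith
  rw [Real.rpow_neg hr0.le, Real.rpow_neg (by linarith), ← div_eq_mul_inv,
    le_div_iff₀ (by positivity), inv_mul_eq_div, ← Real.div_rpow (by linarith) hr0.le]
  exact Real.rpow_le_rpow (by positivity) ((div_le_iff₀ hr0).mpr (by linarith)) hb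

section Kernel

variable {n : ℕ} {α γ : ℝ}

theorem brKernel_nonneg (x : En n) : 0 ≤ brKernel n α γ x := by
  unfold brKernel
  positivity

theorem measurable_brKernel : Measurable (brKernel n α γ) := by
  unfold brKernel
  fun_prop

theorem brKernel_le_norm_rpow (hαn : α < n) {c : ℝ} (hc : 0 ≤ c) (hcγ : c ≤ γ) (x : En n) :
    brKernel n α γ x ≤ ‖x‖ ^ (α - n - c) := by
  rcases eq_or_ne x 0 with rfl | hx
  · simp only [brKernel, norm_zero, Real.zero_rpow (by linarith : α - n ≠ 0), zero_div]
    positivity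
  have hx0 : 0 < ‖x‖ := norm_pos_iff.mpr hx
  have hden : ‖x‖ ^ c ≤ (1 + ‖x‖) ^ γ :=
    (Real.rpow_le_rpow hx0.le (by linarith) hc).trans
      (Real.rpow_le_rpow_of_exponent_le (by linarith) hcγ)
  rw [Real.rpow_sub hx0]
  exact div_le_div_of_nonneg_left (by positivity) (by positivity) hden

theorem brKernel_rpow_le_norm_rpow (hαn : α < n) {c : ℝ} (hc : 0 ≤ c) (hcγ : c ≤ γ) {s : ℝ}
    (hs : 0 ≤ s) (x : En n) : brKernel n α γ x ^ s ≤ ‖x‖ ^ ((α - n - c) * s) := by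
  rw [Real.rpow_mul (norm_nonneg x)]
  exact Real.rpow_le_rpow (brKernel_nonneg x) (brKernel_le_norm_rpow hαn hc hcγ x) hs

theorem exists_lintegral_ball_brKernel_rpow_le (hn : 1 ≤ n) (hαn : α < n) {c : ℝ} (hc : 0 ≤ c)
    (hcγ : c ≤ γ) {s : ℝ} (hs : 0 ≤ s) (hq : -(n : ℝ) < (α - n - c) * s) :
    ∃ C : ℝ≥0∞, C ≠ ⊤ ∧ ∀ (a : En n) {R : ℝ}, 0 < R →
      ∫⁻ x in ball a R, ENNReal.ofReal (brKernel n α γ x ^ s) ≤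
        C * ENNReal.ofReal (R ^ ((n : ℝ) + (α - n - c) * s)) := by
  obtain ⟨C, hC, hbound⟩ := exists_lintegral_ball_norm_rpow_le (volume : Measure (En n))
    (by simpa using hn) (by simpa using hq)
    (mul_nonpos_of_nonpos_of_nonneg (by linarith) hs)
  simp only [finrank_euclideanSpace_fin] at hbound
  exact ⟨C, hC, fun a R hR => (lintegral_mono fun x =>
    ENNReal.ofReal_le_ofReal (brKernel_rpow_le_norm_rpow hαn hc hcγ hs x)).trans (hbound a hR)⟩

theorem integrable_brKernel_rpow (hn : 1 ≤ n) (hαn : α < n) {s : ℝ} (hs : 0 ≤ s)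
    (hnear : ((n : ℝ) - α) * s < n) (hfar : (n : ℝ) < ((n : ℝ) - α + γ) * s) :
    Integrable (fun x => brKernel n α γ x ^ s) := by
  have hγ : 0 ≤ γ := by nlinarith
  have hmeas : AEStronglyMeasurable (fun x => brKernel n α γ x ^ s) :=
    (measurable_brKernel.pow_const s).aestronglyMeasurable
  rw [← integrableOn_univ, ← union_compl_self (ball (0 : En n) 1), integrableOn_union]
  constructor
  · refine integrableOn_ball_of_norm_le_rpow (by simpa using hn) (C := 1) (by simpa using hnear)
      (ae_of_all _ fun x => ?_) hmeas
    rw [Real.norm_of_nonneg (by positivity [brKernel_nonneg (α := α) (γ := γ) x]), one_mul,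
      show -(((n : ℝ) - α) * s) = (α - n - 0) * s by ring]
    exact brKernel_rpow_le_norm_rpow hαn le_rfl hγ hs x
  · set b := ((n : ℝ) - α + γ) * s
    have hdom : Integrable (fun x : En n => 2 ^ b * (1 + ‖x‖) ^ (-b)) :=
      (integrable_one_add_norm (by simpa using hfar)).const_mul _
    refine hdom.integrableOn.mono' hmeas.restrict
      (ae_restrict_of_forall_mem measurableSet_ball.compl fun x hx => ?_)
    have hx1 : 1 ≤ ‖x‖ := by simpa using hx
    rw [Real.norm_of_nonneg (by positivity [brKernel_nonneg (α := α) (γ := γ) x])]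
    calc brKernel n α γ x ^ s ≤ ‖x‖ ^ (-b) := by
          rw [show -b = (α - n - γ) * s by ring]
          exact brKernel_rpow_le_norm_rpow hαn hγ le_rfl hs x
      _ ≤ 2 ^ b * (1 + ‖x‖) ^ (-b) :=
          Real.rpow_neg_le_two_rpow_mul_one_add_rpow_neg hx1 (by nlinarith)

end Kernel

theorem iSup_inv_ofReal_mul_lt_iSup {ι : Type*} (F : ℝ → ι → ℝ≥0∞) {g : ℝ → ℝ}
    (hg_mono : MonotoneOn g (Ioi 0)) (hg_gt : ∀ R, 0 < R → 1 < g R)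
    (hpos : 0 < ⨆ (R : ℝ) (_ : 0 < R) (a : ι), F R a)
    (htop : ⨆ (R : ℝ) (_ : 0 < R) (a : ι), F R a ≠ ⊤)
    (hsmall : ∀ u > 0, ∀ᶠ R in 𝓝[>] 0, ∀ a, F R a ≤ u) :
    ⨆ (R : ℝ) (_ : 0 < R) (a : ι), (ENNReal.ofReal (g R))⁻¹ * F R a <
      ⨆ (R : ℝ) (_ : 0 < R) (a : ι), F R a := by
  set L := ⨆ (R : ℝ) (_ : 0 < R) (a : ι), F R a
  obtain ⟨u, hu0, huL⟩ := exists_between hpos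
  obtain ⟨δ, hδ0, hδ⟩ := (nhdsGT_basis (0 : ℝ)).eventually_iff.mp (hsmall u hu0)
  -- below `δ` the ratio itself is small; above `δ` the weight is at least `g δ > 1`
  have hδL : (ENNReal.ofReal (g δ))⁻¹ * L < L := by
    simpa using ENNReal.mul_lt_mul_left hpos.ne' htop
      (ENNReal.inv_lt_one.mpr (ENNReal.one_lt_ofReal.mpr (hg_gt δ hδ0)))
  refine lt_of_le_of_lt (iSup₂_le fun R hR => iSup_le fun a => ?_) (max_lt huL hδL)
  rcases lt_or_ge R δ with hRδ | hδR
  · refine le_max_of_le_left ((mul_le_of_le_one_left' ?_).trans (hδ ⟨hR, hRδ⟩ a))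
    exact ENNReal.inv_le_one.mpr (ENNReal.one_le_ofReal.mpr (hg_gt R hR).le)
  · refine le_max_of_le_right (mul_le_mul' ?_ (le_iSup₂_of_le R hR (le_iSup _ a)))
    exact ENNReal.inv_le_inv.mpr (ENNReal.ofReal_le_ofReal (hg_mono hδ0 hR hδR))

section MorreyRatio

variable {n : ℕ} {α γ s : ℝ}

def brMorreyRatio (n : ℕ) (α γ s ν R : ℝ) (a : En n) : ℝ≥0∞ :=
  (ENNReal.ofReal (R ^ (-ν)))⁻¹ *
    (((ENNReal.ofReal R) ^ (n : ℝ))⁻¹ *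
      ∫⁻ x in ball a R, ENNReal.ofReal (brKernel n α γ x ^ s)) ^ (1 / s)

theorem kNormGen_rpow_neg (ν : ℝ) :
    kNormGen n α γ s (fun R => R ^ (-ν)) =
      ⨆ (R : ℝ) (_ : 0 < R) (a : En n), brMorreyRatio n α γ s ν R a :=
  rfl

theorem kNormGen_mul_rpow_neg {g : ℝ → ℝ} (hg : ∀ R, 0 < R → 0 ≤ g R) (ν : ℝ) :
    kNormGen n α γ s (fun R => g R * R ^ (-ν)) =
      ⨆ (R : ℝ) (_ : 0 < R) (a : En n),
        (ENNReal.ofReal (g R))⁻¹ * brMorreyRatio n α γ s ν R a := by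
  refine iSup_congr fun R => iSup_congr fun hR => iSup_congr fun a => ?_
  rw [brMorreyRatio, ENNReal.ofReal_mul (hg R hR),
    ENNReal.mul_inv (Or.inr ENNReal.ofReal_ne_top) (Or.inl ENNReal.ofReal_ne_top), mul_assoc]

theorem brMorreyRatio_le_of_lintegral_le (hs : 0 < s) {ν R : ℝ} (hR : 0 < R) {a : En n}
    {C : ℝ≥0∞} {u : ℝ}
    (hI : ∫⁻ x in ball a R, ENNReal.ofReal (brKernel n α γ x ^ s) ≤ C * ENNReal.ofReal (R ^ u)) :
    brMorreyRatio n α γ s ν R a ≤ C ^ (1 / s) * ENNReal.ofReal R ^ (ν + (u - n) / s) := by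
  have hR0 : ENNReal.ofReal R ≠ 0 := by positivity
  have hRtop : ENNReal.ofReal R ≠ ⊤ := ENNReal.ofReal_ne_top
  calc brMorreyRatio n α γ s ν R a
      ≤ ENNReal.ofReal R ^ ν *
          (ENNReal.ofReal R ^ (-(n : ℝ)) * (C * ENNReal.ofReal R ^ u)) ^ (1 / s) := by
        rw [brMorreyRatio, ← ENNReal.ofReal_rpow_of_pos hR, ENNReal.rpow_neg, inv_inv,
          ← ENNReal.rpow_neg, ENNReal.ofReal_rpow_of_pos hR]
        gcongr
        rwa [ENNReal.ofReal_rpow_of_pos hR]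
    _ = C ^ (1 / s) * ENNReal.ofReal R ^ (ν + (u - n) / s) := by
        rw [mul_left_comm, ← ENNReal.rpow_add _ _ hR0 hRtop,
          ENNReal.mul_rpow_of_nonneg _ _ (by positivity), ← ENNReal.rpow_mul,
          ENNReal.rpow_add _ _ hR0 hRtop]
        ring_nf

theorem eventually_brMorreyRatio_le (hn : 1 ≤ n) (hαn : α < n) (hγ : 0 ≤ γ) (hs : 0 < s)
    (hq : ((n : ℝ) - α) * s < n) {ν : ℝ} (hν : (n : ℝ) - α < ν) {u : ℝ≥0∞} (hu : 0 < u) :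
    ∀ᶠ R in 𝓝[>] 0, ∀ a : En n, brMorreyRatio n α γ s ν R a ≤ u := by
  obtain ⟨C, hC, hI⟩ := exists_lintegral_ball_brKernel_rpow_le (α := α) (γ := γ) hn hαn le_rfl hγ
    hs.le (by linarith)
  have hlim : Tendsto (fun R => C ^ (1 / s) * ENNReal.ofReal R ^ (ν - (n - α))) (𝓝 0) (𝓝 0) := by
    have h := ENNReal.Tendsto.const_mul
      (((ENNReal.continuous_rpow_const (y := ν - (n - α))).tendsto _).comp
        (ENNReal.continuous_ofReal.tendsto 0))
      (Or.inr (ENNReal.rpow_ne_top_of_nonneg (by positivity) hC) : _ ∨ C ^ (1 / s) ≠ ⊤)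
    rwa [Function.comp_def, ENNReal.ofReal_zero, ENNReal.zero_rpow_of_pos (by linarith),
      mul_zero] at h
  filter_upwards [self_mem_nhdsWithin, nhdsWithin_le_nhds ((tendsto_order.1 hlim).2 u hu)]
    with R hR hRu a
  refine (brMorreyRatio_le_of_lintegral_le hs hR (hI a hR)).trans (le_of_lt ?_)
  convert hRu using 3
  field_simp
  ring

theorem exists_brMorreyRatio_le (hn : 1 ≤ n) (hαn : α < n) (hs : 0 < s) {t : ℝ} (hst : s ≤ t)
    (hlow : ((n : ℝ) - α) * t < n) (hhigh : (n : ℝ) < ((n : ℝ) - α + γ) * t) :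
    ∃ C : ℝ≥0∞, C ≠ ⊤ ∧ ∀ R, 0 < R → ∀ a : En n, brMorreyRatio n α γ s (n / t) R a ≤ C := by
  have ht : 0 < t := hs.trans_le hst
  rcases hst.lt_or_eq with hst | rfl
  · -- `K ^ s ≤ ‖x‖ ^ (-n s / t)`, which exactly balances the Morrey weight
    obtain ⟨C, hC, hI⟩ := exists_lintegral_ball_brKernel_rpow_le (α := α) (γ := γ)
      (c := n / t - (n - α)) hn hαn (by rw [sub_nonneg, le_div_iff₀ ht]; linarith)
      (by rw [sub_le_iff_le_add, div_le_iff₀ ht]; linarith) hs.le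
      (by rw [show (α - n - (n / t - (n - α))) * s = -(n * (s / t)) by ring, neg_lt_neg_iff]
          exact mul_lt_of_lt_one_right (by exact_mod_cast hn) ((div_lt_one ht).mpr hst))
    refine ⟨C ^ (1 / s), ENNReal.rpow_ne_top_of_nonneg (by positivity) hC, fun R hR a => ?_⟩
    refine (brMorreyRatio_le_of_lintegral_le hs hR (hI a hR)).trans_eq ?_
    rw [show (n : ℝ) / t + ((n : ℝ) + (α - n - (n / t - (n - α))) * s - n) / s = 0 by
      field_simp; ring, ENNReal.rpow_zero, mul_one]
  · -- `‖x‖ ^ (-n)` is not locally integrable, but `K` lies in `L ^ s` of the whole space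
    have hint := integrable_brKernel_rpow (γ := γ) hn hαn hs.le hlow hhigh
    refine ⟨(∫⁻ x, ENNReal.ofReal (brKernel n α γ x ^ s)) ^ (1 / s),
      ENNReal.rpow_ne_top_of_nonneg (by positivity) hint.lintegral_lt_top.ne, fun R hR a => ?_⟩
    have hI : ∫⁻ x in ball a R, ENNReal.ofReal (brKernel n α γ x ^ s) ≤
        (∫⁻ x, ENNReal.ofReal (brKernel n α γ x ^ s)) * ENNReal.ofReal (R ^ (0 : ℝ)) := by
      rw [Real.rpow_zero, ENNReal.ofReal_one, mul_one]
      exact setLIntegral_le_lintegral _ _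
    refine (brMorreyRatio_le_of_lintegral_le hs hR hI).trans_eq ?_
    rw [show (n : ℝ) / s + (0 - n) / s = 0 by ring, ENNReal.rpow_zero, mul_one]

theorem brMorreyRatio_one_zero_pos (hn : 1 ≤ n) (hs : 0 ≤ s) (ν : ℝ) :
    0 < brMorreyRatio n α γ s ν 1 0 := by
  have : Nontrivial (En n) := by
    have : Nonempty (Fin n) := ⟨⟨0, hn⟩⟩
    infer_instance
  have hpos : ball (0 : En n) 1 \ {0} ⊆
      Function.support fun x => ENNReal.ofReal (brKernel n α γ x ^ s) := by
    intro x hx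
    have hx0 : 0 < ‖x‖ := norm_pos_iff.mpr hx.2
    simp only [Function.mem_support, ne_eq, ENNReal.ofReal_eq_zero, not_le, brKernel]
    positivity
  have hI : 0 < ∫⁻ x in ball (0 : En n) 1, ENNReal.ofReal (brKernel n α γ x ^ s) := by
    rw [setLIntegral_pos_iff (measurable_brKernel.pow_const s).ennreal_ofReal]
    calc 0 < volume (ball (0 : En n) 1) := measure_ball_pos _ _ one_pos
      _ = volume (ball (0 : En n) 1 \ {0}) := (measure_sdiff_null (measure_singleton 0)).symm
      _ ≤ _ := measure_mono (subset_inter hpos sdiff_subset)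
  simpa [brMorreyRatio] using ENNReal.rpow_pos_of_nonneg hI (by positivity)

end MorreyRatio

theorem besselRiesz_kernel_norm_lt_general (n : ℕ) (hn : 1 ≤ n) (α γ s t t₁ : ℝ)
    (hαn : α < n) (hγ : 0 < γ)
    (hs1 : 1 ≤ s) (hst : s ≤ t)
    (ht1 : (n : ℝ) / ((n : ℝ) + γ - α) < t) (ht2 : t < (n : ℝ) / ((n : ℝ) - α))
    (htt₁ : t < t₁) :
    kNormGen n α γ s (fun R => (1 + R ^ ((n : ℝ) / t₁)) * R ^ (-((n : ℝ) / t))) <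
      kNormGen n α γ s (fun R => R ^ (-((n : ℝ) / t))) := by
  have hs : 0 < s := by linarith
  have hn0 : (0 : ℝ) < n := by exact_mod_cast hn
  have ht : 0 < t := (div_pos hn0 (by linarith)).trans ht1
  have hlow : ((n : ℝ) - α) * t < n := by
    have := (lt_div_iff₀ (by linarith : (0 : ℝ) < n - α)).mp ht2
    linarith
  have hhigh : (n : ℝ) < ((n : ℝ) - α + γ) * t := by
    have := (div_lt_iff₀ (by linarith)).mp ht1
    linarith
  have hexp : 0 ≤ (n : ℝ) / t₁ := div_nonneg hn0.le (ht.trans htt₁).le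
  obtain ⟨C, hC, hbound⟩ := exists_brMorreyRatio_le (γ := γ) hn hαn hs hst hlow hhigh
  rw [kNormGen_mul_rpow_neg (fun R hR => by positivity), kNormGen_rpow_neg]
  refine iSup_inv_ofReal_mul_lt_iSup _
    (fun R hR R' _ hRR' => add_le_add_right (Real.rpow_le_rpow (le_of_lt hR) hRR' hexp) 1)
    (fun R hR => lt_add_of_pos_right 1 (Real.rpow_pos_of_pos hR _))
    ((brMorreyRatio_one_zero_pos hn hs.le _).trans_le (le_iSup₂_of_le 1 one_pos (le_iSup _ 0)))
    (ne_top_of_le_ne_top hC (iSup₂_le fun R hR => iSup_le (hbound R hR)))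
    (fun u hu => eventually_brMorreyRatio_le hn hαn hγ.le hs ?_ ?_ hu)
  · nlinarith
  · rw [lt_div_iff₀ ht]
    linarith

/-- comparison of generalized Morrey kernel norms, where
`σ(R) = (1+R^{n/t₁})R^{-n/t}` and `σ₀(R) = R^{-n/t}`. -/
theorem besselRiesz_kernel_norm_lt (n : ℕ) (hn : 1 ≤ n) (α γ s t t₁ : ℝ)
    (hα0 : 0 < α) (hαn : α < n) (hγ : 0 < γ)
    (hs1 : 1 ≤ s) (hst : s ≤ t)
    (ht1 : (n : ℝ) / ((n : ℝ) + γ - α) < t) (ht2 : t < (n : ℝ) / ((n : ℝ) - α))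
    (htt₁ : t < t₁) :
    kNormGen n α γ s (fun R => (1 + R ^ ((n : ℝ) / t₁)) * R ^ (-((n : ℝ) / t))) <
      kNormGen n α γ s (fun R => R ^ (-((n : ℝ) / t))) :=
  besselRiesz_kernel_norm_lt_general n hn α γ s t t₁ hαn hγ hs1 hst ht1 ht2 htt₁
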